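/- Let C be a dagger category. If f : X → Y in C_e^∞ is daggerable, then the morphism ν^C_Y ∘ f ∘ (ν^C_X)^† : L^C X → L^C Y is daggerable, with dagger ν^C_X ∘ f^† ∘ (ν^C_Y)^†. -/

import Mathlib

open CategoryTheory CategoryTheory.Limits

universe v u

/-- An object of `C^∞ = C^{ℕᵒᵖ}`: a cochain `X(0) ← X(1) ← X(2) ← ⋯` in `C`. -/
structure GObj (C : Type u) [Category.{v} C] where
  obj : ℕ → C
  res : ∀ n, obj (n + 1) ⟶ obj n

namespace GObj

variable {C : Type u} [Category.{v} C]

/-- A morphism in `C^∞`: a natural transformation between cochains. -/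
@[ext]
structure GHom (X Y : GObj C) where
  app : ∀ n, X.obj n ⟶ Y.obj n
  nat : ∀ n, X.res n ≫ app n = app (n + 1) ≫ Y.res n

instance : Category (GObj C) where
  Hom := GHom
  id X := { app := fun _ => 𝟙 _, nat := by intro n; simp }
  comp {X Y Z} f g :=
    { app := fun n => f.app n ≫ g.app n
      nat := by
        intro n
        rw [← Category.assoc, f.nat, Category.assoc, g.nat, ← Category.assoc] }
  id_comp f := by apply GHom.ext; funext n; simp
  comp_id f := by apply GHom.ext; funext n; simp
  assoc f g h := by apply GHom.ext; funext n; simp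

@[simp] theorem id_app (X : GObj C) (n : ℕ) : (𝟙 X : X ⟶ X).app n = 𝟙 (X.obj n) := rfl

@[simp] theorem comp_app {X Y Z : GObj C} (f : X ⟶ Y) (g : Y ⟶ Z) (n : ℕ) :
    (f ≫ g).app n = f.app n ≫ g.app n := rfl

/-- The constant cochain on an object of `C`. -/
def constG (T : C) : GObj C where
  obj _ := T
  res _ := 𝟙 T

end GObj
namespace GObj

variable {C : Type u} [Category.{v} C]

/-- Object part (componentwise) of the later functor on `C^∞`. -/
def LObjAux (T : C) (X : GObj C) : ℕ → C
  | 0 => T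
  | n + 1 => X.obj n

/-- The later functor on objects: shift the cochain and put the terminal object
in degree `0`. -/
def LObj {T : C} (hT : IsTerminal T) (X : GObj C) : GObj C where
  obj := LObjAux T X
  res n :=
    match n with
    | 0 => hT.from (X.obj 0)
    | n + 1 => X.res n

/-- Morphism part (componentwise) of the later functor on `C^∞`. -/
def LMapAux {T : C} (hT : IsTerminal T) {X Y : GObj C} (f : X ⟶ Y) :
    ∀ n, LObjAux T X n ⟶ LObjAux T Y n
  | 0 => 𝟙 T
  | n + 1 => f.app n

/-- The later functor `L^C : C^∞ → C^∞`. -/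
def LFunctor {T : C} (hT : IsTerminal T) : GObj C ⥤ GObj C where
  obj X := LObj hT X
  map {X Y} f :=
    { app := LMapAux hT f
      nat := by
        intro n
        cases n with
        | zero => exact hT.hom_ext _ _
        | succ n => exact f.nat n }
  map_id X := by
    apply GHom.ext; funext n
    cases n with
    | zero => rfl
    | succ n => rfl
  map_comp f g := by
    apply GHom.ext; funext n
    cases n with
    | zero => exact (Category.id_comp _).symm
    | succ n => rfl

/-- The `next` natural transformation `ν^C_X : X → L^C X`, componentwise. -/
def gnext {T : C} (hT : IsTerminal T) (X : GObj C) : X ⟶ LObj hT X where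
  app n :=
    match n with
    | 0 => hT.from (X.obj 0)
    | n + 1 => X.res n
  nat n := by
    cases n with
    | zero => exact hT.hom_ext _ _
    | succ n => rfl

end GObj

/-- A dagger structure on a category: an involutive, identity-on-objects,
contravariant endofunctor. -/
structure DaggerStruct (C : Type u) [Category.{v} C] where
  dag : ∀ {X Y : C}, (X ⟶ Y) → (Y ⟶ X)
  dag_dag : ∀ {X Y : C} (f : X ⟶ Y), dag (dag f) = f
  dag_id : ∀ X : C, dag (𝟙 X) = 𝟙 X
  dag_comp : ∀ {X Y Z : C} (f : X ⟶ Y) (g : Y ⟶ Z), dag (f ≫ g) = dag g ≫ dag f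

/-- A rig category structure: two symmetric monoidal structures `(⊗, I)` and
`(⊕, O)` together with natural distributivity and absorption isomorphisms.
(The full list of Laplaza coherence conditions is omitted.) -/
structure RigStruct (C : Type u) [Category.{v} C] where
  tensorM : MonoidalCategory C
  tensorSym : @SymmetricCategory C _ tensorM
  plusM : MonoidalCategory C
  plusSym : @SymmetricCategory C _ plusM
  distribL : ∀ X Y Z : C,
    tensorM.tensorObj (plusM.tensorObj X Y) Z ≅
      plusM.tensorObj (tensorM.tensorObj X Z) (tensorM.tensorObj Y Z)
  distribR : ∀ X Y Z : C,
    tensorM.tensorObj Z (plusM.tensorObj X Y) ≅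
      plusM.tensorObj (tensorM.tensorObj Z X) (tensorM.tensorObj Z Y)
  absorbL : ∀ X : C, tensorM.tensorObj plusM.tensorUnit X ≅ plusM.tensorUnit
  absorbR : ∀ X : C, tensorM.tensorObj X plusM.tensorUnit ≅ plusM.tensorUnit
  distribL_nat : ∀ {X X' Y Y' Z Z' : C} (f : X ⟶ X') (g : Y ⟶ Y') (h : Z ⟶ Z'),
    tensorM.tensorHom (plusM.tensorHom f g) h ≫ (distribL X' Y' Z').hom =
      (distribL X Y Z).hom ≫
        plusM.tensorHom (tensorM.tensorHom f h) (tensorM.tensorHom g h)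
  distribR_nat : ∀ {X X' Y Y' Z Z' : C} (f : X ⟶ X') (g : Y ⟶ Y') (h : Z ⟶ Z'),
    tensorM.tensorHom h (plusM.tensorHom f g) ≫ (distribR X' Y' Z').hom =
      (distribR X Y Z).hom ≫
        plusM.tensorHom (tensorM.tensorHom h f) (tensorM.tensorHom h g)

/-- A dagger rig category: a rig category with a dagger for which `⊗` and `⊕`
are dagger functors and the coherence isomorphisms are dagger isomorphisms. -/
structure DaggerRig (C : Type u) [Category.{v} C] extends DaggerStruct C, RigStruct C where
  dag_tensorHom : ∀ {X₁ Y₁ X₂ Y₂ : C} (f : X₁ ⟶ Y₁) (g : X₂ ⟶ Y₂),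
    dag (tensorM.tensorHom f g) = tensorM.tensorHom (dag f) (dag g)
  dag_plusHom : ∀ {X₁ Y₁ X₂ Y₂ : C} (f : X₁ ⟶ Y₁) (g : X₂ ⟶ Y₂),
    dag (plusM.tensorHom f g) = plusM.tensorHom (dag f) (dag g)
  tensor_assoc_unitary : ∀ X Y Z : C,
    dag (tensorM.associator X Y Z).hom = (tensorM.associator X Y Z).inv
  tensor_lUnit_unitary : ∀ X : C,
    dag (tensorM.leftUnitor X).hom = (tensorM.leftUnitor X).inv
  tensor_rUnit_unitary : ∀ X : C,
    dag (tensorM.rightUnitor X).hom = (tensorM.rightUnitor X).inv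
  tensor_braid_unitary : ∀ X Y : C,
    dag (tensorSym.braiding X Y).hom = (tensorSym.braiding X Y).inv
  plus_assoc_unitary : ∀ X Y Z : C,
    dag (plusM.associator X Y Z).hom = (plusM.associator X Y Z).inv
  plus_lUnit_unitary : ∀ X : C,
    dag (plusM.leftUnitor X).hom = (plusM.leftUnitor X).inv
  plus_rUnit_unitary : ∀ X : C,
    dag (plusM.rightUnitor X).hom = (plusM.rightUnitor X).inv
  plus_braid_unitary : ∀ X Y : C,
    dag (plusSym.braiding X Y).hom = (plusSym.braiding X Y).inv
  distribL_unitary : ∀ X Y Z : C, dag (distribL X Y Z).hom = (distribL X Y Z).inv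
  distribR_unitary : ∀ X Y Z : C, dag (distribR X Y Z).hom = (distribR X Y Z).inv
  absorbL_unitary : ∀ X : C, dag (absorbL X).hom = (absorbL X).inv
  absorbR_unitary : ∀ X : C, dag (absorbR X).hom = (absorbR X).inv

namespace GObj

variable {C : Type u} [Category.{v} C]

/-- A morphism of `C^∞` is daggerable if its componentwise daggers form a
natural transformation in the opposite direction. -/
def Daggerable (D : DaggerStruct C) {X Y : GObj C} (f : X ⟶ Y) : Prop :=
  ∃ g : Y ⟶ X, ∀ n, g.app n = D.dag (f.app n)

end GObj

/-!
Because the restrictions of `X` are dagger epimorphisms, `(ν_X)^† ≫ ν_X = 𝟙`, so naturality of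
`ν` gives `(ν_X)^† ≫ f ≫ ν_Y = (ν_X)^† ≫ ν_X ≫ L f = L f`. The conjugate of `f` by `next` is
therefore just `L f`, and `L` visibly preserves componentwise daggers: its dagger is `L f^†`,
which for the same reason (now with the restrictions of `Y`) is the conjugate of `f^†`.
-/

namespace GObj

variable {C : Type u} [Category.{v} C] (D : DaggerStruct C) {T : C} (hT : IsTerminal T)
  {X Y : GObj C}

theorem dag_gnext_app_comp_app_comp_gnext_app
    (hX : ∀ n, D.dag (X.res n) ≫ X.res n = 𝟙 (X.obj n)) (f : X ⟶ Y) (n : ℕ) :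
    D.dag ((gnext hT X).app n) ≫ f.app n ≫ (gnext hT Y).app n =
      ((LFunctor hT).map f).app n := by
  cases n with
  | zero => exact hT.hom_ext _ _
  | succ n =>
    change D.dag (X.res n) ≫ f.app (n + 1) ≫ Y.res n = f.app n
    rw [← f.nat n, ← Category.assoc, hX, Category.id_comp]

theorem LFunctor_map_app_eq_dag {f : X ⟶ Y} {g : Y ⟶ X}
    (hg : ∀ n, g.app n = D.dag (f.app n)) (n : ℕ) :
    ((LFunctor hT).map g).app n = D.dag (((LFunctor hT).map f).app n) := by
  cases n with
  | zero => exact (D.dag_id T).symm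
  | succ n => exact hg n

end GObj

open GObj in
/-- If `f : X ⟶ Y` in `C_e^∞` is daggerable, then
`ν^C_Y ∘ f ∘ (ν^C_X)^† : L^C X ⟶ L^C Y` is daggerable as well, with dagger
`ν^C_X ∘ f^† ∘ (ν^C_Y)^†`. -/
theorem conjugate_by_next_daggerable {C : Type u} [Category.{v} C]
    (D : DaggerStruct C) {O : C} (hO : IsZero O) (X Y : GObj C)
    (hX : ∀ n, D.dag (X.res n) ≫ X.res n = 𝟙 (X.obj n))
    (hY : ∀ n, D.dag (Y.res n) ≫ Y.res n = 𝟙 (Y.obj n))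
    (f : X ⟶ Y) (hf : Daggerable D f) :
    ∃ (g : LObj hO.isTerminal X ⟶ LObj hO.isTerminal Y)
      (g' : LObj hO.isTerminal Y ⟶ LObj hO.isTerminal X),
      (∀ n, g.app (n + 1) = D.dag (X.res n) ≫ f.app (n + 1) ≫ Y.res n) ∧
      (∀ n, g'.app n = D.dag (g.app n)) ∧
      (∀ n, g'.app (n + 1) =
        D.dag (Y.res n) ≫ D.dag (f.app (n + 1)) ≫ X.res n) := by
  obtain ⟨fdag, hfdag⟩ := hf
  let L := LFunctor hO.isTerminal
  refine ⟨L.map f, L.map fdag,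
    fun n => (dag_gnext_app_comp_app_comp_gnext_app D hO.isTerminal hX f (n + 1)).symm,
    LFunctor_map_app_eq_dag D hO.isTerminal hfdag, fun n => ?_⟩
  rw [← hfdag]
  exact (dag_gnext_app_comp_app_comp_gnext_app D hO.isTerminal hY fdag (n + 1)).symm
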